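/- Let G be a finite connected simple graph. Then the relation on the set of non-separating edges of G defined by 'e ∼ f if and only if e = f or e and f are coparallel' is an equivalence relation. In particular it is transitive: if e, f, h are non-separating edges of G with e ≠ h such that deleting {e, f} disconnects G and deleting {f, h} disconnects G, then deleting {e, h} disconnects G. -/

import Mathlib

/-!
Once `G - e` is connected, deleting `f` as well disconnects `G` exactly when `f` is a bridge
of `G - e`, i.e. when every cycle of `G` through `f` also passes through `e`. In this form
the relation "every cycle through `f` contains `e`" is visibly transitive.
-/

namespace SimpleGraph

variable {V : Type*} {G : SimpleGraph V} {e f h : Sym2 V}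

theorem Connected.connected_deleteEdges_singleton_iff (hG : G.Connected) :
    (G.deleteEdges {e}).Connected ↔ ¬ G.IsBridge e := by
  induction e using Sym2.ind with
  | _ x y =>
    exact ⟨fun hc hb => hb (hc.preconnected x y), hG.connected_delete_edge_of_not_isBridge⟩

theorem isBridge_deleteEdges_singleton_iff_forall_isCycle (hf : f ∈ G.edgeSet) (hfe : f ≠ e) :
    (G.deleteEdges {e}).IsBridge f ↔
      ∀ ⦃u : V⦄ (p : G.Walk u u), p.IsCycle → f ∈ p.edges → e ∈ p.edges := by
  have hf' : f ∈ (G.deleteEdges {e}).edgeSet := by simp [hf, hfe]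
  rw [isBridge_iff_forall_cycle_notMem hf']
  constructor
  · intro hbridge u p hp hfp
    by_contra hep
    exact hbridge (p.toDeleteEdge e hep) (hp.toDeleteEdges G {e} _) (by simpa using hfp)
  · intro hcycles u p hp hfp
    have hep := hcycles (p.mapLe (deleteEdges_le _)) (hp.mapLe _)
      (by rwa [Walk.edges_mapLe_eq_edges])
    rw [Walk.edges_mapLe_eq_edges] at hep
    simpa using p.edges_subset_edgeSet hep

theorem ne_of_not_connected_deleteEdges_pair (he : (G.deleteEdges {e}).Connected)
    (hef : ¬ (G.deleteEdges {e, f}).Connected) : f ≠ e := by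
  rintro rfl
  exact hef (by rwa [Set.pair_eq_singleton])

theorem not_connected_deleteEdges_pair_iff_forall_isCycle (he : (G.deleteEdges {e}).Connected)
    (hf : f ∈ G.edgeSet) (hfe : f ≠ e) :
    ¬ (G.deleteEdges {e, f}).Connected ↔
      ∀ ⦃u : V⦄ (p : G.Walk u u), p.IsCycle → f ∈ p.edges → e ∈ p.edges := by
  rw [← isBridge_deleteEdges_singleton_iff_forall_isCycle hf hfe,
    ← Set.singleton_union, ← deleteEdges_deleteEdges,
    he.connected_deleteEdges_singleton_iff, not_not]

theorem not_connected_deleteEdges_pair_trans (he : (G.deleteEdges {e}).Connected)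
    (hf : (G.deleteEdges {f}).Connected) (hfE : f ∈ G.edgeSet) (hhE : h ∈ G.edgeSet)
    (heh : e ≠ h) (hef : ¬ (G.deleteEdges {e, f}).Connected)
    (hfh : ¬ (G.deleteEdges {f, h}).Connected) :
    ¬ (G.deleteEdges {e, h}).Connected := by
  have hcycle_ef := (not_connected_deleteEdges_pair_iff_forall_isCycle he hfE
    (ne_of_not_connected_deleteEdges_pair he hef)).mp hef
  have hcycle_fh := (not_connected_deleteEdges_pair_iff_forall_isCycle hf hhE
    (ne_of_not_connected_deleteEdges_pair hf hfh)).mp hfh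
  rw [not_connected_deleteEdges_pair_iff_forall_isCycle he hhE heh.symm]
  exact fun u p hp hhp => hcycle_ef p hp (hcycle_fh p hp hhp)

end SimpleGraph

theorem coparallel_equivalence_general
    {V : Type*} (G : SimpleGraph V) :
    Equivalence (fun e f : {e : Sym2 V // e ∈ G.edgeSet ∧ (G.deleteEdges {e}).Connected} =>
        e = f ∨ (e.1 ≠ f.1 ∧ ¬ (G.deleteEdges {e.1, f.1}).Connected)) ∧
      ∀ e f h : Sym2 V, e ∈ G.edgeSet → f ∈ G.edgeSet → h ∈ G.edgeSet →
        (G.deleteEdges {e}).Connected → (G.deleteEdges {f}).Connected →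
        (G.deleteEdges {h}).Connected → e ≠ h →
        ¬ (G.deleteEdges {e, f}).Connected → ¬ (G.deleteEdges {f, h}).Connected →
        ¬ (G.deleteEdges {e, h}).Connected := by
  refine ⟨⟨fun _ => Or.inl rfl, ?symm, ?trans⟩,
    fun e f h _ hfE hhE he hf _ heh => G.not_connected_deleteEdges_pair_trans he hf hfE hhE heh⟩
  case symm =>
    rintro e f (rfl | ⟨hne, hd⟩)
    · exact Or.inl rfl
    · exact Or.inr ⟨hne.symm, by rwa [Set.pair_comm]⟩
  case trans =>
    rintro e f h (rfl | ⟨hne_ef, hef⟩) (rfl | ⟨hne_fh, hfh⟩)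
    · exact Or.inl rfl
    · exact Or.inr ⟨hne_fh, hfh⟩
    · exact Or.inr ⟨hne_ef, hef⟩
    by_cases heh : e.1 = h.1
    · exact Or.inl (Subtype.ext heh)
    · exact Or.inr
        ⟨heh, G.not_connected_deleteEdges_pair_trans e.2.2 f.2.2 f.2.1 h.2.1 heh hef hfh⟩

/-- For a finite connected simple graph `G`, the relation on the non-separating edges
of `G` given by "`e ∼ f` iff `e = f` or `e` and `f` are coparallel" (i.e. `e ≠ f`,
neither is a bridge, and deleting both disconnects `G`) is an equivalence relation.
In particular it is transitive: if `e, f, h` are non-separating edges with `e ≠ h`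
such that deleting `{e, f}` disconnects `G` and deleting `{f, h}` disconnects `G`,
then deleting `{e, h}` disconnects `G`. -/
theorem coparallel_equivalence
    {V : Type*} [Fintype V] (G : SimpleGraph V) (hG : G.Connected) :
    Equivalence (fun e f : {e : Sym2 V // e ∈ G.edgeSet ∧ (G.deleteEdges {e}).Connected} =>
        e = f ∨ (e.1 ≠ f.1 ∧ ¬ (G.deleteEdges {e.1, f.1}).Connected)) ∧
      ∀ e f h : Sym2 V, e ∈ G.edgeSet → f ∈ G.edgeSet → h ∈ G.edgeSet →
        (G.deleteEdges {e}).Connected → (G.deleteEdges {f}).Connected →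
        (G.deleteEdges {h}).Connected → e ≠ h →
        ¬ (G.deleteEdges {e, f}).Connected → ¬ (G.deleteEdges {f, h}).Connected →
        ¬ (G.deleteEdges {e, h}).Connected :=
  coparallel_equivalence_general G
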